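/- arXiv:2404.09346 — 2 statements merged into one kernel-verified Lean document; each statement's English description precedes it below -/
import Mathlib

section
/- Let q ∈ ℝ with q ∉ {0, 1, -1}, set β = q + q⁻¹ and let a, b, c ∈ ℝ. Define θᵢ = a + b·qⁱ + c·q⁻ⁱ for all integers i ≥ 0, and set γ = (2-β)·a. Fix an integer i ≥ 1 and assume θ₀² ≠ θᵢ² and θ₀ + θᵢ ≠ 0. Then θ₂ - (θ₀θ₁² - θ₁θ_{i-1}θᵢ + θ₀θ_{i-1}θ_{i+1} - θ₁θᵢθ_{i+1})/(θ₀² - θᵢ²) = γ·(θᵢ - θ₁)/(θᵢ + θ₀). -/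
set_option maxHeartbeats 1000000 in
lemma aux_key (q u a b c : ℝ) (hq : q ≠ 0) (hu : u ≠ 0) :
    ((a + b * q ^ 2 + c * (q ^ 2)⁻¹) *
        ((a + b + c) ^ 2 - (a + b * (q * u) + c * (q * u)⁻¹) ^ 2)
      - ((a + b + c) * (a + b * q + c * q⁻¹) ^ 2
        - (a + b * q + c * q⁻¹) * (a + b * u + c * u⁻¹) * (a + b * (q * u) + c * (q * u)⁻¹)
        + (a + b + c) * (a + b * u + c * u⁻¹) * (a + b * (q ^ 2 * u) + c * (q ^ 2 * u)⁻¹)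
        - (a + b * q + c * q⁻¹) * (a + b * (q * u) + c * (q * u)⁻¹) *
            (a + b * (q ^ 2 * u) + c * (q ^ 2 * u)⁻¹)))
      * ((a + b * (q * u) + c * (q * u)⁻¹) + (a + b + c))
    = (2 - (q + q⁻¹)) * a * ((a + b * (q * u) + c * (q * u)⁻¹) - (a + b * q + c * q⁻¹))
        * ((a + b + c) ^ 2 - (a + b * (q * u) + c * (q * u)⁻¹) ^ 2) := by
  field_simp
  ring

theorem stmt_12 (q : ℝ) (hq0 : q ≠ 0) (hq1 : q ≠ 1) (hqm1 : q ≠ -1)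
    (β : ℝ) (hβ : β = q + q⁻¹) (a b c : ℝ) (θ : ℕ → ℝ)
    (hθ : ∀ i, θ i = a + b * q ^ i + c * q⁻¹ ^ i)
    (γ : ℝ) (hγ : γ = (2 - β) * a)
    (i : ℕ) (hi : 1 ≤ i) (h1 : θ 0 ^ 2 ≠ θ i ^ 2) (h2 : θ 0 + θ i ≠ 0) :
    θ 2 - (θ 0 * θ 1 ^ 2 - θ 1 * θ (i - 1) * θ i + θ 0 * θ (i - 1) * θ (i + 1)
        - θ 1 * θ i * θ (i + 1)) / (θ 0 ^ 2 - θ i ^ 2) =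
      γ * (θ i - θ 1) / (θ i + θ 0) := by
  obtain ⟨j, rfl⟩ : ∃ j, i = j + 1 := ⟨i - 1, (Nat.succ_pred_eq_of_pos hi).symm⟩
  have hsub : θ 0 - θ (j + 1) ≠ 0 := fun h => h1 (by rw [show θ 0 = θ (j+1) by linarith])
  have hden : θ 0 ^ 2 - θ (j + 1) ^ 2 ≠ 0 := by
    rw [show θ 0 ^ 2 - θ (j+1) ^ 2 = (θ 0 - θ (j+1)) * (θ 0 + θ (j+1)) by ring]
    exact mul_ne_zero hsub h2
  have h2' : θ (j + 1) + θ 0 ≠ 0 := fun h => h2 (by linarith)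
  set N := θ 0 * θ 1 ^ 2 - θ 1 * θ (j + 1 - 1) * θ (j + 1) + θ 0 * θ (j + 1 - 1) * θ (j + 1 + 1)
        - θ 1 * θ (j + 1) * θ (j + 1 + 1) with hN
  rw [show θ 2 - N / (θ 0 ^ 2 - θ (j+1) ^ 2)
      = (θ 2 * (θ 0 ^ 2 - θ (j+1) ^ 2) - N) / (θ 0 ^ 2 - θ (j+1) ^ 2) by
    field_simp]
  rw [div_eq_div_iff hden h2']
  have hu : q ^ j ≠ 0 := pow_ne_zero _ hq0
  have key := aux_key q (q ^ j) a b c hq0 hu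
  have e0 : θ 0 = a + b + c := by rw [hθ]; norm_num
  have e1 : θ 1 = a + b * q + c * q⁻¹ := by rw [hθ]; norm_num
  have e2 : θ 2 = a + b * q ^ 2 + c * (q ^ 2)⁻¹ := by rw [hθ]; rw [inv_pow]
  have ej : θ (j + 1 - 1) = a + b * q ^ j + c * (q ^ j)⁻¹ := by
    rw [Nat.add_sub_cancel, hθ, inv_pow]
  have ei : θ (j + 1) = a + b * (q * q ^ j) + c * (q * q ^ j)⁻¹ := by
    rw [hθ, inv_pow, pow_succ]; ring_nf
  have ek : θ (j + 1 + 1) = a + b * (q ^ 2 * q ^ j) + c * (q ^ 2 * q ^ j)⁻¹ := by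
    rw [hθ, inv_pow, show j + 1 + 1 = j + 2 by ring, pow_add]; ring_nf
  rw [hN, hγ, hβ, e0, e1, e2, ej, ei, ek]
  linarith [key]
end

section
/- Let q ∈ ℝ with q ∉ {0,1,-1}, set β = q + q⁻¹, let a, b, c ∈ ℝ, and define θᵢ = a + b qⁱ + c q⁻ⁱ for integers i ≥ 0. Fix i ≥ 2 and assume θ₀ ≠ θ₂, θ_{i-1} ≠ θᵢ, and θᵢ ≠ θ_{i+1}. Define αⱼ = (θ₁-θ₂)(θ₀+θ₁-θ_{j-1}-θⱼ) / ((θ₀-θ₂)(θ_{j-1}-θⱼ)) for j ∈ {i, i+1}. Then αᵢ·α_{i+1} = (β+2)(θ₁-θ₂)²(θ₀-θᵢ)(θ₁-θᵢ) / ((θ₀-θ₂)²(θ_{i-1}-θᵢ)(θᵢ-θ_{i+1})). -/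
/-!
Writing `x = q ^ j`, each of `θ₀ - θⱼ`, `θ₁ - θⱼ` and `θ₀ + θ₁ - θⱼ - θⱼ₊₁` is a polynomial
in `x` times a factor `b - c q⁻ᵏ x⁻¹`. In these factorizations the numerators of `αᵢ` and
`αᵢ₊₁` together carry exactly the factors of `(θ₀ - θᵢ)(θ₁ - θᵢ)`, up to the constant
`(1 + q)² / q = β + 2`; the denominators of the two sides agree as they stand.
-/

namespace QRacahTheta

variable {q a b c : ℝ} {θ : ℕ → ℝ}

theorem zero_sub_eq (hq : q ≠ 0) (hθ : ∀ j, θ j = a + b * q ^ j + c * q⁻¹ ^ j) (j : ℕ) :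
    θ 0 - θ j = (1 - q ^ j) * (b - c * q⁻¹ ^ j) := by
  simp only [hθ, inv_pow]
  field_simp
  ring

theorem one_sub_eq (hq : q ≠ 0) (hθ : ∀ j, θ j = a + b * q ^ j + c * q⁻¹ ^ j) (j : ℕ) :
    θ 1 - θ j = (q - q ^ j) * (b - c * q⁻¹ ^ (j + 1)) := by
  simp only [hθ, inv_pow, pow_succ]
  field_simp
  ring

theorem zero_add_one_sub_sub_eq (hq : q ≠ 0) (hθ : ∀ j, θ j = a + b * q ^ j + c * q⁻¹ ^ j)
    (j : ℕ) :
    θ 0 + θ 1 - θ j - θ (j + 1) = (1 + q) * (1 - q ^ j) * (b - c * q⁻¹ ^ (j + 1)) := by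
  simp only [hθ, inv_pow, pow_succ]
  field_simp
  ring

/-- At `i = 0` both sides vanish, with `θ (0 - 1) = θ 0`. -/
theorem consecutive_sums_mul (hq : q ≠ 0) (hθ : ∀ j, θ j = a + b * q ^ j + c * q⁻¹ ^ j)
    (i : ℕ) :
    (θ 0 + θ 1 - θ (i - 1) - θ i) * (θ 0 + θ 1 - θ i - θ (i + 1)) =
      (q + q⁻¹ + 2) * (θ 0 - θ i) * (θ 1 - θ i) := by
  cases i with
  | zero => simp only [Nat.zero_sub, zero_add]; ring
  | succ n =>
    rw [Nat.add_sub_cancel, zero_add_one_sub_sub_eq hq hθ, zero_add_one_sub_sub_eq hq hθ,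
      zero_sub_eq hq hθ, one_sub_eq hq hθ]
    field_simp
    ring

end QRacahTheta

theorem stmt_18_general (q : ℝ) (hq0 : q ≠ 0)
    (β : ℝ) (hβ : β = q + q⁻¹) (a b c : ℝ) (θ : ℕ → ℝ)
    (hθ : ∀ i, θ i = a + b * q ^ i + c * q⁻¹ ^ i)
    (i : ℕ)
    (α : ℕ → ℝ)
    (hα : ∀ j, j = i ∨ j = i + 1 →
      α j = (θ 1 - θ 2) * (θ 0 + θ 1 - θ (j - 1) - θ j) /
            ((θ 0 - θ 2) * (θ (j - 1) - θ j))) :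
    α i * α (i + 1) =
      (β + 2) * (θ 1 - θ 2) ^ 2 * (θ 0 - θ i) * (θ 1 - θ i) /
        ((θ 0 - θ 2) ^ 2 * (θ (i - 1) - θ i) * (θ i - θ (i + 1))) := by
  rw [hα i (.inl rfl), hα (i + 1) (.inr rfl), Nat.add_sub_cancel, div_mul_div_comm, hβ]
  congr 1
  · linear_combination (θ 1 - θ 2) ^ 2 * QRacahTheta.consecutive_sums_mul hq0 hθ i
  · ring

theorem stmt_18 (q : ℝ) (hq0 : q ≠ 0) (hq1 : q ≠ 1) (hqm1 : q ≠ -1)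
    (β : ℝ) (hβ : β = q + q⁻¹) (a b c : ℝ) (θ : ℕ → ℝ)
    (hθ : ∀ i, θ i = a + b * q ^ i + c * q⁻¹ ^ i)
    (i : ℕ) (hi : 2 ≤ i)
    (h02 : θ 0 ≠ θ 2) (hii : θ (i - 1) ≠ θ i) (hii1 : θ i ≠ θ (i + 1))
    (α : ℕ → ℝ)
    (hα : ∀ j, j = i ∨ j = i + 1 →
      α j = (θ 1 - θ 2) * (θ 0 + θ 1 - θ (j - 1) - θ j) /
            ((θ 0 - θ 2) * (θ (j - 1) - θ j))) :
    α i * α (i + 1) =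
      (β + 2) * (θ 1 - θ 2) ^ 2 * (θ 0 - θ i) * (θ 1 - θ i) /
        ((θ 0 - θ 2) ^ 2 * (θ (i - 1) - θ i) * (θ i - θ (i + 1))) :=
  stmt_18_general q hq0 β hβ a b c θ hθ i α hα
end
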